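/- Let G⁺ be a Garside monoid with Garside element Δ, let δ ∈ D(Δ) be balanced with D(δ) = D(Δ) ∩ G⁺_δ (so G_δ is a standard parabolic subgroup). Then for x, y ∈ D(δ), if (x, y) is in left normal form in G⁺_δ (i.e., no non-trivial element of D(δ) left-divides y and right-complements x inside D(δ)), then α_L(x·y) = x in G⁺, i.e., (x, y) is also in left normal form in G⁺. -/

import Mathlib

namespace Garside

variable {M : Type*}

/-- left-divisibility -/
def LDvd [Monoid M] (a b : M) : Prop := ∃ c, b = a * c

/-- right-divisibility -/
def RDvd [Monoid M] (a b : M) : Prop := ∃ c, b = c * a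

/-- Noetherian: lengths of factorizations into non-identity factors are bounded. -/
def NoetherianM (M : Type*) [Monoid M] : Prop :=
  ∀ g : M, ∃ N : ℕ, ∀ l : List M, l.prod = g → (∀ x ∈ l, x ≠ 1) → l.length ≤ N

/-- balanced element: left divisors = right divisors -/
def Balanced [Monoid M] (δ : M) : Prop := ∀ g : M, LDvd g δ ↔ RDvd g δ

/-- the set of (left-)divisors of a (balanced) element -/
def D [Monoid M] (δ : M) : Set M := {g | LDvd g δ}

/-- atom of a monoid -/
def IsAtomM [Monoid M] (h : M) : Prop := h ≠ 1 ∧ ∀ g k : M, h = g * k → g = 1 ∨ k = 1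

/-- support of a balanced element: atoms dividing it -/
def suppM [Monoid M] (δ : M) : Set M := {s | IsAtomM s ∧ LDvd s δ}

/-- A Garside monoid structure on a cancellative monoid. -/
structure GarsideMonoid (M : Type*) [CancelMonoid M] where
  noeth : NoetherianM M
  wedgeL : M → M → M
  wedgeL_dvd_left : ∀ a b, LDvd (wedgeL a b) a
  wedgeL_dvd_right : ∀ a b, LDvd (wedgeL a b) b
  le_wedgeL : ∀ a b c, LDvd c a → LDvd c b → LDvd c (wedgeL a b)
  veeL : M → M → M
  dvd_veeL_left : ∀ a b, LDvd a (veeL a b)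
  dvd_veeL_right : ∀ a b, LDvd b (veeL a b)
  veeL_le : ∀ a b c, LDvd a c → LDvd b c → LDvd (veeL a b) c
  wedgeR : M → M → M
  wedgeR_dvd_left : ∀ a b, RDvd (wedgeR a b) a
  wedgeR_dvd_right : ∀ a b, RDvd (wedgeR a b) b
  le_wedgeR : ∀ a b c, RDvd c a → RDvd c b → RDvd c (wedgeR a b)
  veeR : M → M → M
  dvd_veeR_left : ∀ a b, RDvd a (veeR a b)
  dvd_veeR_right : ∀ a b, RDvd b (veeR a b)
  veeR_le : ∀ a b c, RDvd a c → RDvd b c → RDvd (veeR a b) c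
  Δ : M
  balanced : Balanced Δ
  finD : (D Δ).Finite
  gen : Submonoid.closure (D Δ) = ⊤

variable [CancelMonoid M]

/-- head function (left) -/
def GarsideMonoid.αL (G : GarsideMonoid M) (w : M) : M := G.wedgeL w G.Δ

/-- head function (right) -/
def GarsideMonoid.αR (G : GarsideMonoid M) (w : M) : M := G.wedgeR w G.Δ

/-- Garside submonoid: a sublattice submonoid closed under the head maps. -/
def IsGarsideSubmonoid (G : GarsideMonoid M) (H : Submonoid M) : Prop :=
  (∀ a ∈ H, ∀ b ∈ H,
      G.wedgeL a b ∈ H ∧ G.veeL a b ∈ H ∧ G.wedgeR a b ∈ H ∧ G.veeR a b ∈ H) ∧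
  (∀ h ∈ H, G.αL h ∈ H ∧ G.αR h ∈ H)

/-- least upper bound of a set for left-divisibility -/
def IsLubL (S : Set M) (δ : M) : Prop :=
  (∀ x ∈ S, LDvd x δ) ∧ ∀ c, (∀ x ∈ S, LDvd x c) → LDvd δ c

/-- least upper bound of a set for right-divisibility -/
def IsLubR (S : Set M) (δ : M) : Prop :=
  (∀ x ∈ S, RDvd x δ) ∧ ∀ c, (∀ x ∈ S, RDvd x c) → RDvd δ c

/-!
The head `αL (x * y)`, the gcd of `x * y` and `Δ`, is left-divisible by `x`, so it is `x * z` with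
`z` left-dividing `y`, hence `δ`. Both `x` and `z` lie in the submonoid generated by `supp δ` and
`x * z` divides `Δ`, so the parabolic condition puts `x * z` in `D δ`; normality of `(x, y)` in
`G⁺_δ` then forces `z = 1`.
-/

theorem LDvd.trans {a b c : M} (hab : LDvd a b) (hbc : LDvd b c) : LDvd a c := by
  obtain ⟨d, rfl⟩ := hab
  obtain ⟨e, rfl⟩ := hbc
  exact ⟨d * e, mul_assoc a d e⟩

theorem LDvd.of_mul_left {a b c : M} (h : LDvd (a * b) (a * c)) : LDvd b c := by
  obtain ⟨d, hd⟩ := h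
  exact ⟨d, mul_left_cancel (hd.trans (mul_assoc a b d))⟩

theorem mem_D_of_ldvd {δ a b : M} (hab : LDvd a b) (hb : b ∈ D δ) : a ∈ D δ :=
  hab.trans hb

namespace GarsideMonoid

variable (G : GarsideMonoid M)

theorem αL_ldvd (w : M) : LDvd (G.αL w) w :=
  G.wedgeL_dvd_left w G.Δ

theorem αL_mem_D (w : M) : G.αL w ∈ D G.Δ :=
  G.wedgeL_dvd_right w G.Δ

theorem ldvd_αL {a w : M} (haw : LDvd a w) (ha : a ∈ D G.Δ) : LDvd a (G.αL w) :=
  G.le_wedgeL w G.Δ a haw ha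

end GarsideMonoid

theorem mul_mem_D_of_parabolic {Δ δ a b : M}
    (hpar : D δ = D Δ ∩ (Submonoid.closure (suppM δ) : Set M))
    (ha : a ∈ D δ) (hb : b ∈ D δ) (hab : a * b ∈ D Δ) : a * b ∈ D δ := by
  rw [hpar] at ha hb ⊢
  exact ⟨hab, mul_mem ha.2 hb.2⟩

theorem parabolic_normal_form_coincides_general {M : Type*} [CancelMonoid M]
    (G : GarsideMonoid M) (δ : M)
    (hpar : D δ = D G.Δ ∩ (Submonoid.closure (suppM δ) : Set M))
    (x y : M) (hx : x ∈ D δ) (hy : y ∈ D δ)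
    (hnf : ∀ z, z ∈ D δ → x * z ∈ D δ → LDvd (x * z) (x * y) → z = 1) :
    G.αL (x * y) = x := by
  have hxΔ : x ∈ D G.Δ := (hpar ▸ hx).1
  obtain ⟨z, hz⟩ := G.ldvd_αL ⟨y, rfl⟩ hxΔ
  have hxz_dvd : LDvd (x * z) (x * y) := hz ▸ G.αL_ldvd (x * y)
  have hzδ : z ∈ D δ := mem_D_of_ldvd hxz_dvd.of_mul_left hy
  have hxzδ : x * z ∈ D δ := mul_mem_D_of_parabolic hpar hx hzδ (hz ▸ G.αL_mem_D (x * y))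
  rw [hz, hnf z hzδ hxzδ hxz_dvd, mul_one]

theorem parabolic_normal_form_coincides {M : Type*} [CancelMonoid M]
    (G : GarsideMonoid M) (δ : M) (hδD : δ ∈ D G.Δ) (hbal : Balanced δ)
    (hpar : D δ = D G.Δ ∩ (Submonoid.closure (suppM δ) : Set M))
    (x y : M) (hx : x ∈ D δ) (hy : y ∈ D δ)
    (hnf : ∀ z, z ∈ D δ → x * z ∈ D δ → LDvd (x * z) (x * y) → z = 1) :
    G.αL (x * y) = x :=
  parabolic_normal_form_coincides_general G δ hpar x y hx hy hnf
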